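/- arXiv:2305.08742 — 2 statements merged into one kernel-verified Lean document; each statement's English description precedes it below -/
import Mathlib

section
/- With the coarse truncated approximation Q of H_r, d := −H⁻¹ g and d̂ := −P Q⁻¹ Pᵀ g, one has dᵀ H d̂ = λ̂² and d̂ᵀ H d̂ ≤ λ̂². -/
open Matrix

/-! The truncation only raises the trailing eigenvalues `σ_i` (`i > p`) to `σ_{p+1}`, so
`Q - H_r` has the eigenbasis `u` with eigenvalues `≥ 0` and is positive semidefinite.
With `w := Q⁻¹ Pᵀ g` we get `d̂ᵀ H d̂ = wᵀ H_r w ≤ wᵀ Q w = λ̂²`, while `dᵀ H d̂ = gᵀ P w = λ̂²`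
because `H` cancels against `H⁻¹`. -/

namespace Matrix

variable {ι : Type*} [Fintype ι] [DecidableEq ι]

lemma of_mul_transpose_eq_one_of_orthonormal {u : ι → ι → ℝ}
    (hortho : ∀ i j, u i ⬝ᵥ u j = if i = j then (1 : ℝ) else 0) :
    of u * (of u)ᵀ = 1 := by
  ext i j
  simpa [mul_apply, one_apply, dotProduct] using hortho i j

lemma eq_transpose_mul_diagonal_mul_of_orthonormal_eigenvectors {M : Matrix ι ι ℝ}
    {u : ι → ι → ℝ} {e : ι → ℝ}
    (hortho : ∀ i j, u i ⬝ᵥ u j = if i = j then (1 : ℝ) else 0)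
    (heig : ∀ i, M *ᵥ u i = e i • u i) :
    M = (of u)ᵀ * diagonal e * of u := by
  have hUtU : (of u)ᵀ * of u = 1 :=
    mul_eq_one_comm.mp (of_mul_transpose_eq_one_of_orthonormal hortho)
  have hMUt : M * (of u)ᵀ = (of u)ᵀ * diagonal e := by
    ext i j
    have hcol : (M * (of u)ᵀ) i j = (M *ᵥ u j) i := by
      simp [mul_apply, mulVec, dotProduct]
    rw [hcol, heig j]
    simp [mul_comm]
  calc M = M * ((of u)ᵀ * of u) := by rw [hUtU, Matrix.mul_one]
    _ = (of u)ᵀ * diagonal e * of u := by rw [← Matrix.mul_assoc, hMUt]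

lemma det_eq_prod_of_orthonormal_eigenvectors {M : Matrix ι ι ℝ} {u : ι → ι → ℝ}
    {e : ι → ℝ}
    (hortho : ∀ i j, u i ⬝ᵥ u j = if i = j then (1 : ℝ) else 0)
    (heig : ∀ i, M *ᵥ u i = e i • u i) :
    M.det = ∏ i, e i := by
  rw [eq_transpose_mul_diagonal_mul_of_orthonormal_eigenvectors hortho heig, det_mul, det_mul,
    det_diagonal, mul_comm, ← mul_assoc, ← det_mul,
    of_mul_transpose_eq_one_of_orthonormal hortho, det_one, one_mul]

lemma posSemidef_of_orthonormal_eigenvectors {M : Matrix ι ι ℝ} {u : ι → ι → ℝ}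
    {e : ι → ℝ}
    (hortho : ∀ i j, u i ⬝ᵥ u j = if i = j then (1 : ℝ) else 0)
    (heig : ∀ i, M *ᵥ u i = e i • u i) (he : 0 ≤ e) :
    M.PosSemidef := by
  rw [eq_transpose_mul_diagonal_mul_of_orthonormal_eigenvectors hortho heig]
  simpa using (PosSemidef.diagonal he).conjTranspose_mul_mul_same (of u)

lemma transpose_mulVec_dotProduct {R m k : Type*} [CommSemiring R] [Fintype m] [Fintype k]
    (A : Matrix m k R) (x : m → R) (y : k → R) : (Aᵀ *ᵥ x) ⬝ᵥ y = x ⬝ᵥ (A *ᵥ y) := by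
  rw [mulVec_transpose, dotProduct_mulVec]

end Matrix

lemma le_truncate_of_antitone {N p : ℕ} {σ : Fin N → ℝ}
    (hσmono : ∀ i j : Fin N, i ≤ j → σ j ≤ σ i) (hpN : p < N) (i : Fin N) :
    σ i ≤ if (i : ℕ) < p then σ i else σ ⟨p, hpN⟩ := by
  split_ifs with hip
  · exact le_rfl
  · exact hσmono _ _ (Fin.mk_le_of_le_val (not_lt.mp hip))

theorem stmt6_general {n N p : ℕ} (hpN : p < N)
    (H : Matrix (Fin n) (Fin n) ℝ) (hH : H.PosDef)
    (P : Matrix (Fin n) (Fin N) ℝ)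
    (σ : Fin N → ℝ) (u : Fin N → Fin N → ℝ)
    (hσpos : ∀ i, 0 < σ i)
    (hσmono : ∀ i j : Fin N, i ≤ j → σ j ≤ σ i)
    (hortho : ∀ i j : Fin N, u i ⬝ᵥ u j = if i = j then (1 : ℝ) else 0)
    (hHreig : ∀ i, (Pᵀ * H * P) *ᵥ u i = σ i • u i)
    (Q : Matrix (Fin N) (Fin N) ℝ)
    (hQeig : ∀ i : Fin N, Q *ᵥ u i = (if (i : ℕ) < p then σ i else σ ⟨p, hpN⟩) • u i)
    (g : Fin n → ℝ) :
    (-(H⁻¹ *ᵥ g)) ⬝ᵥ (H *ᵥ -(P *ᵥ (Q⁻¹ *ᵥ (Pᵀ *ᵥ g))))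
        = (Pᵀ *ᵥ g) ⬝ᵥ (Q⁻¹ *ᵥ (Pᵀ *ᵥ g)) ∧
    (-(P *ᵥ (Q⁻¹ *ᵥ (Pᵀ *ᵥ g)))) ⬝ᵥ (H *ᵥ -(P *ᵥ (Q⁻¹ *ᵥ (Pᵀ *ᵥ g))))
        ≤ (Pᵀ *ᵥ g) ⬝ᵥ (Q⁻¹ *ᵥ (Pᵀ *ᵥ g)) := by
  set w := Q⁻¹ *ᵥ (Pᵀ *ᵥ g)
  have hQdet : IsUnit Q.det := by
    rw [det_eq_prod_of_orthonormal_eigenvectors hortho hQeig, isUnit_iff_ne_zero]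
    exact Finset.prod_ne_zero_iff.mpr fun i _ => by split_ifs <;> exact (hσpos _).ne'
  have hQw : Q *ᵥ w = Pᵀ *ᵥ g := by rw [mulVec_mulVec, mul_nonsing_inv Q hQdet, one_mulVec]
  have hgap : (Q - Pᵀ * H * P).PosSemidef :=
    posSemidef_of_orthonormal_eigenvectors hortho
      (fun i => by rw [sub_mulVec, hQeig, hHreig, ← sub_smul])
      (fun i => sub_nonneg.mpr (le_truncate_of_antitone hσmono hpN i))
  simp only [mulVec_neg, dotProduct_neg, neg_dotProduct, neg_neg]
  constructor
  · rw [← transpose_mulVec_dotProduct H, ← conjTranspose_eq_transpose_of_trivial,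
      hH.isHermitian.eq, mulVec_mulVec,
      mul_nonsing_inv H (isUnit_iff_ne_zero.mpr hH.det_pos.ne'), one_mulVec,
      transpose_mulVec_dotProduct]
  · calc (P *ᵥ w) ⬝ᵥ (H *ᵥ (P *ᵥ w)) = w ⬝ᵥ ((Pᵀ * H * P) *ᵥ w) := by
          rw [dotProduct_comm, ← transpose_mulVec_dotProduct P, mulVec_mulVec, mulVec_mulVec,
            dotProduct_comm]
      _ ≤ w ⬝ᵥ (Q *ᵥ w) := by
          have hquad := hgap.dotProduct_mulVec_nonneg w
          rwa [star_trivial, sub_mulVec, dotProduct_sub, sub_nonneg] at hquad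
      _ = (Pᵀ *ᵥ g) ⬝ᵥ w := by rw [hQw, dotProduct_comm]

/-- With the coarse truncated approximation `Q` of
`H_r := Pᵀ H P`, `d := −H⁻¹ g` and `d̂ := −P Q⁻¹ Pᵀ g`, one has
`dᵀ H d̂ = λ̂²` and `d̂ᵀ H d̂ ≤ λ̂²`, where `λ̂² = gᵀ P Q⁻¹ Pᵀ g`. -/
theorem stmt6 {n N p : ℕ} (hp : 1 ≤ p) (hpN : p < N) (hNn : N < n)
    (H : Matrix (Fin n) (Fin n) ℝ) (hH : H.PosDef)
    (P : Matrix (Fin n) (Fin N) ℝ) (hP : P.rank = N)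
    (σ : Fin N → ℝ) (u : Fin N → Fin N → ℝ)
    (hσpos : ∀ i, 0 < σ i)
    (hσmono : ∀ i j : Fin N, i ≤ j → σ j ≤ σ i)
    (hortho : ∀ i j : Fin N, u i ⬝ᵥ u j = if i = j then (1 : ℝ) else 0)
    (hHreig : ∀ i, (Pᵀ * H * P) *ᵥ u i = σ i • u i)
    (Q : Matrix (Fin N) (Fin N) ℝ) (hQsymm : Q.IsSymm)
    (hQeig : ∀ i : Fin N, Q *ᵥ u i = (if (i : ℕ) < p then σ i else σ ⟨p, hpN⟩) • u i)
    (g : Fin n → ℝ) :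
    (-(H⁻¹ *ᵥ g)) ⬝ᵥ (H *ᵥ -(P *ᵥ (Q⁻¹ *ᵥ (Pᵀ *ᵥ g))))
        = (Pᵀ *ᵥ g) ⬝ᵥ (Q⁻¹ *ᵥ (Pᵀ *ᵥ g)) ∧
    (-(P *ᵥ (Q⁻¹ *ᵥ (Pᵀ *ᵥ g)))) ⬝ᵥ (H *ᵥ -(P *ᵥ (Q⁻¹ *ᵥ (Pᵀ *ᵥ g))))
        ≤ (Pᵀ *ᵥ g) ⬝ᵥ (Q⁻¹ *ᵥ (Pᵀ *ᵥ g)) :=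
  stmt6_general hpN H hH P σ u hσpos hσmono hortho hHreig Q hQeig g
end

section
/- Let f be a strictly convex standard self-concordant function on ℝⁿ, x a point, H := ∇²f(x), P an n×N matrix of full column rank, H_r := Pᵀ H P, and Q the coarse truncated approximation of H_r with parameter p. Let λ̂ := (∇f(x)ᵀ P Q⁻¹ Pᵀ ∇f(x))^{1/2} and d̂ := −P Q⁻¹ Pᵀ ∇f(x). If t > 0 satisfies t λ̂ < 1 and x⁺ := x + t d̂, then (i) ∇²f(x⁺) ⪯ (1 − t λ̂)⁻² ∇²f(x), and (ii) [∇²f(x⁺)]⁻¹ ⪯ (1 − t λ̂)⁻² [∇²f(x)]⁻¹ (in the Loewner order on symmetric matrices). -/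
/-!
Write `‖w‖_y² = D²f(y)[w, w]`. Self-concordance bounds the diagonal of the symmetric trilinear
form `D³f(y)` by `2 ‖w‖_y³`; restricted to a plane this is a binary cubic bounded by `2` on the
unit circle, and interpolating `cos 3ψ`, `sin 3ψ` at three nodes `2π/3` apart shows that the
off-diagonal values obey the same bound: `|D³f(y)[v, u, u]| ≤ 2 ‖u‖_y² ‖v‖_y`.

Along `s ↦ x + s v` with `‖v‖_x ≤ r < 1`, the diagonal bound makes `s ↦ 1 / ‖v‖_{x+sv} + s`
monotone, so `(1 - s r) ‖v‖_{x+sv} ≤ r`; then the mixed bound gives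
`(1 - s r) |d/ds ‖u‖²_{x+sv}| ≤ 2 r ‖u‖²_{x+sv}`, so `(1 - s r)² ‖u‖²_{x+sv}` decreases and
`(1 - s r)⁻² ‖u‖²_{x+sv}` increases on `[0, 1]`. This is the two-sided Loewner bound
`(1 - r)² ∇²f(x) ⪯ ∇²f(x + v) ⪯ (1 - r)⁻² ∇²f(x)`, and inversion reverses the Loewner order.

For the coarse step `v = t d̂`, with `z = Q⁻¹ Pᵀ ∇f(x)` we get `‖d̂‖_x² = zᵀ H_r z ≤ zᵀ Q z = λ̂²`,
since `H_r ⪯ Q` (same eigenvectors, eigenvalues `σ_i ≤ q_i`); so `r = t λ̂` works.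
-/

open Matrix Set
open scoped MatrixOrder

def binaryCubic (a b g d c s : ℝ) : ℝ :=
  a * c ^ 3 + 3 * b * c ^ 2 * s + 3 * g * c * s ^ 2 + d * s ^ 3

lemma exists_cos_sin_eq {α β : ℝ} (h : α ^ 2 + β ^ 2 = 1) :
    ∃ θ : ℝ, Real.cos θ = α ∧ Real.sin θ = β := by
  obtain ⟨θ, hθ⟩ := (Complex.norm_eq_one_iff ⟨α, β⟩).1 <| by
    rw [Complex.norm_eq_sqrt_sq_add_sq]; simp [h]
  exact ⟨θ, by simpa using congrArg Complex.re hθ, by simpa using congrArg Complex.im hθ⟩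

/-- With `c = cos ψ`, `s = sin ψ`, `R = √3`: the nonnegative weights `(1 + 2 cos 2φ)² / 9`
(summing to `1`) at the nodes `φ = ψ, ψ + 2π/3, ψ - 2π/3` recover `a cos 3ψ + b sin 3ψ` from the
values of the binary cubic. -/
lemma binaryCubic_three_node_interpolation (a b g d c s R : ℝ) (hcs : c ^ 2 + s ^ 2 = 1)
    (hR : R ^ 2 = 3) :
    (4 * c ^ 2 - 1) ^ 2 / 9 * binaryCubic a b g d c s
      + 4 / 9 * (s ^ 2 * (R * c + s) ^ 2)
        * binaryCubic a b g d (-c / 2 - R * s / 2) (-s / 2 + R * c / 2)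
      + 4 / 9 * (s ^ 2 * (R * c - s) ^ 2)
        * binaryCubic a b g d (-c / 2 + R * s / 2) (-s / 2 - R * c / 2)
      = a * (4 * c ^ 3 - 3 * c) + b * (3 * s - 4 * s ^ 3) := by
  unfold binaryCubic
  linear_combination
    (3*s*b - (1/9)*s^3*d - s^3*b - (1/9)*s^5*d - s^5*b - 3*c*a - (1/3)*c*s^2*g - 3*c*s^2*a
      - (1/3)*c*s^4*g - 3*c*s^4*a + (8/3)*c^2*s*b + (7/9)*c^2*s^3*d + (5/3)*c^2*s^3*b
      + (8/9)*c^3*a + (7/3)*c^3*s^2*g - (19/9)*c^3*s^2*a + (16/3)*c^4*s*b + (16/9)*c^5*a) * hcs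
    + (-(1/3)*s^7*b - c*s^6*a - (2/9)*c*s^6*R^2*a + (2/9)*c^2*s^5*d + (1/3)*c^2*s^5*b
      + (1/3)*c^2*s^5*R^2*b + (2/3)*c^3*s^4*g - (5/3)*c^3*s^4*a - (1/3)*c^3*s^4*R^2*a
      - (1/3)*c^4*s^3*d + (7/3)*c^4*s^3*b - (1/9)*c^4*s^3*R^2*d + (2/3)*c^4*s^3*R^2*b
      - c^5*s^2*g - (1/9)*c^5*s^2*a - (1/3)*c^5*s^2*R^2*g) * hR

theorem abs_linear_le_of_abs_binaryCubic_le {a b g d : ℝ}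
    (h : ∀ c s : ℝ, c ^ 2 + s ^ 2 = 1 → |binaryCubic a b g d c s| ≤ 2)
    {α β : ℝ} (hαβ : α ^ 2 + β ^ 2 = 1) : |a * α + b * β| ≤ 2 := by
  obtain ⟨θ, rfl, rfl⟩ := exists_cos_sin_eq hαβ
  set c := Real.cos (θ / 3)
  set s := Real.sin (θ / 3)
  set R := √3
  have hcs : c ^ 2 + s ^ 2 = 1 := Real.cos_sq_add_sin_sq _
  have hR : R ^ 2 = 3 := Real.sq_sqrt (by norm_num)
  have hcos : Real.cos θ = 4 * c ^ 3 - 3 * c := by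
    rw [← Real.cos_three_mul, mul_div_cancel₀ _ three_ne_zero]
  have hsin : Real.sin θ = 3 * s - 4 * s ^ 3 := by
    rw [← Real.sin_three_mul, mul_div_cancel₀ _ three_ne_zero]
  have hnode : ∀ w c' s' : ℝ, 0 ≤ w → c' ^ 2 + s' ^ 2 = 1 →
      |w * binaryCubic a b g d c' s'| ≤ w * 2 := fun w c' s' hw hc's' => by
    rw [abs_mul, abs_of_nonneg hw]; exact mul_le_mul_of_nonneg_left (h c' s' hc's') hw
  rw [hcos, hsin, ← binaryCubic_three_node_interpolation a b g d c s R hcs hR]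
  refine (abs_add_three _ _ _).trans ?_
  refine (add_le_add_three (hnode _ _ _ (by positivity) hcs) (hnode _ _ _ (by positivity) ?_)
    (hnode _ _ _ (by positivity) ?_)).trans (le_of_eq ?_)
  · linear_combination hcs + (c ^ 2 / 4 + s ^ 2 / 4) * hR
  · linear_combination hcs + (c ^ 2 / 4 + s ^ 2 / 4) * hR
  · linear_combination (8/9 + 8/9*s^2 + 16/9*c^2) * hcs * 2 + (8/9*c^2*s^2) * hR * 2

section SymmetricTrilinear

variable {E : Type*} [NormedAddCommGroup E] [NormedSpace ℝ E]
  {T : E →L[ℝ] E →L[ℝ] E →L[ℝ] ℝ} {B : E →L[ℝ] E →L[ℝ] ℝ}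

lemma apply_add_smul_cube (hT₁₂ : ∀ a b c, T a b c = T b a c) (hT₂₃ : ∀ a b c, T a b c = T a c b)
    (e₁ e₂ : E) (c s : ℝ) :
    T (c • e₁ + s • e₂) (c • e₁ + s • e₂) (c • e₁ + s • e₂)
      = binaryCubic (T e₁ e₁ e₁) (T e₁ e₁ e₂) (T e₁ e₂ e₂) (T e₂ e₂ e₂) c s := by
  have h₁ : T e₂ e₁ e₁ = T e₁ e₁ e₂ := by rw [hT₁₂, hT₂₃]
  have h₂ : T e₁ e₂ e₁ = T e₁ e₁ e₂ := hT₂₃ _ _ _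
  have h₃ : T e₂ e₂ e₁ = T e₁ e₂ e₂ := by rw [hT₂₃, hT₁₂]
  have h₄ : T e₂ e₁ e₂ = T e₁ e₂ e₂ := hT₁₂ _ _ _
  simp only [map_add, map_smul, _root_.add_apply, _root_.smul_apply,
    smul_eq_mul, h₁, h₂, h₃, h₄, binaryCubic]
  ring

lemma apply_add_smul_self (hB : ∀ a b, B a b = B b a) (e₁ e₂ : E) (c s : ℝ) :
    B (c • e₁ + s • e₂) (c • e₁ + s • e₂)
      = c ^ 2 * B e₁ e₁ + 2 * c * s * B e₁ e₂ + s ^ 2 * B e₂ e₂ := by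
  simp only [map_add, map_smul, _root_.add_apply, _root_.smul_apply,
    smul_eq_mul, hB e₂ e₁]
  ring

lemma abs_apply_le_of_orthonormal (hT₁₂ : ∀ a b c, T a b c = T b a c)
    (hT₂₃ : ∀ a b c, T a b c = T a c b) (hB : ∀ a b, B a b = B b a)
    (hTB : ∀ w, B w w = 1 → |T w w w| ≤ 2) {e₁ e₂ : E}
    (h₁ : B e₁ e₁ = 1) (h₂ : B e₂ e₂ = 1) (h₁₂ : B e₁ e₂ = 0) {α β : ℝ}
    (hαβ : α ^ 2 + β ^ 2 = 1) : |T (α • e₁ + β • e₂) e₁ e₁| ≤ 2 := by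
  have hcubic : ∀ c s : ℝ, c ^ 2 + s ^ 2 = 1 →
      |binaryCubic (T e₁ e₁ e₁) (T e₁ e₁ e₂) (T e₁ e₂ e₂) (T e₂ e₂ e₂) c s| ≤ 2 := by
    intro c s hcs
    rw [← apply_add_smul_cube hT₁₂ hT₂₃]
    exact hTB _ (by rw [apply_add_smul_self hB, h₁, h₂, h₁₂]; linear_combination hcs)
  have hlin : T (α • e₁ + β • e₂) e₁ e₁ = T e₁ e₁ e₁ * α + T e₁ e₁ e₂ * β := by
    simp only [map_add, map_smul, _root_.add_apply, _root_.smul_apply,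
      smul_eq_mul, hT₁₂ e₂, hT₂₃ e₁ e₂]
    ring
  rw [hlin]
  exact abs_linear_le_of_abs_binaryCubic_le hcubic hαβ

lemma abs_apply_le_sqrt_of_orthonormal (hT₁₂ : ∀ a b c, T a b c = T b a c)
    (hT₂₃ : ∀ a b c, T a b c = T a c b) (hB : ∀ a b, B a b = B b a)
    (hTB : ∀ w, B w w = 1 → |T w w w| ≤ 2) {e₁ e₂ : E}
    (h₁ : B e₁ e₁ = 1) (h₂ : B e₂ e₂ = 1) (h₁₂ : B e₁ e₂ = 0) (α β : ℝ) :
    |T (α • e₁ + β • e₂) e₁ e₁| ≤ 2 * √(α ^ 2 + β ^ 2) := by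
  rcases (add_nonneg (sq_nonneg α) (sq_nonneg β)).eq_or_lt with h0 | hpos
  · obtain ⟨rfl, rfl⟩ : α = 0 ∧ β = 0 := ⟨by nlinarith, by nlinarith⟩
    simp
  set ρ := √(α ^ 2 + β ^ 2)
  have hρ : 0 < ρ := Real.sqrt_pos.2 hpos
  have hρsq : ρ ^ 2 = α ^ 2 + β ^ 2 := Real.sq_sqrt hpos.le
  have hunit : (α / ρ) ^ 2 + (β / ρ) ^ 2 = 1 := by
    field_simp; linarith
  have hscale : α • e₁ + β • e₂ = ρ • ((α / ρ) • e₁ + (β / ρ) • e₂) := by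
    simp only [smul_add, smul_smul, mul_div_cancel₀ _ hρ.ne']
  rw [hscale, map_smul, _root_.smul_apply, _root_.smul_apply, smul_eq_mul, abs_mul,
    abs_of_pos hρ, mul_comm 2]
  exact mul_le_mul_of_nonneg_left
    (abs_apply_le_of_orthonormal hT₁₂ hT₂₃ hB hTB h₁ h₂ h₁₂ hunit) hρ.le

lemma abs_apply_le_of_apply_self_eq_one (hT₁₂ : ∀ a b c, T a b c = T b a c)
    (hT₂₃ : ∀ a b c, T a b c = T a c b) (hB : ∀ a b, B a b = B b a)
    (hBpos : ∀ w, w ≠ 0 → 0 < B w w) (hTB : ∀ w, B w w = 1 → |T w w w| ≤ 2) {u : E}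
    (hu : B u u = 1) (v : E) : |T v u u| ≤ 2 * √(B v v) := by
  set α := B u v
  set w := v - α • u
  have huw : B u w = 0 := by simp [w, hu, α]
  have hv : v = α • u + w := by simp [w]
  by_cases hw : w = 0
  · rw [hw, add_zero] at hv
    calc |T v u u| = |α| * |T u u u| := by simp [hv, abs_mul]
      _ ≤ |α| * 2 := mul_le_mul_of_nonneg_left (hTB u hu) (abs_nonneg α)
      _ = 2 * √(B v v) := by simp [hv, hu, ← sq, Real.sqrt_sq_eq_abs, mul_comm]
  set δ := √(B w w)
  have hδ : 0 < δ := Real.sqrt_pos.2 (hBpos w hw)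
  set e₂ := δ⁻¹ • w
  have hv' : v = α • u + δ • e₂ := by simp [hv, e₂, smul_smul, hδ.ne']
  have h₂ : B e₂ e₂ = 1 := by
    have : B w w = δ ^ 2 := (Real.sq_sqrt (hBpos w hw).le).symm
    simp only [e₂, map_smul, _root_.smul_apply, smul_eq_mul, this]
    field_simp
  have h₁₂ : B u e₂ = 0 := by simp [e₂, huw]
  have hvv : B v v = α ^ 2 + δ ^ 2 := by
    rw [hv', apply_add_smul_self hB, hu, h₂, h₁₂]; ring
  rw [hvv, hv']
  exact abs_apply_le_sqrt_of_orthonormal hT₁₂ hT₂₃ hB hTB hu h₂ h₁₂ α δ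

lemma abs_apply_le_mul_sqrt (hT₁₂ : ∀ a b c, T a b c = T b a c)
    (hT₂₃ : ∀ a b c, T a b c = T a c b) (hB : ∀ a b, B a b = B b a)
    (hBpos : ∀ w, w ≠ 0 → 0 < B w w) (hTB : ∀ w, |T w w w| ≤ 2 * B w w ^ (3 / 2 : ℝ))
    (u v : E) : |T v u u| ≤ 2 * B u u * √(B v v) := by
  rcases eq_or_ne u 0 with rfl | hu
  · simp
  have hunit : ∀ w, B w w = 1 → |T w w w| ≤ 2 := fun w hw => by
    simpa [hw] using hTB w
  set γ := √(B u u)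
  have hγ : 0 < γ := Real.sqrt_pos.2 (hBpos u hu)
  have hγsq : B u u = γ ^ 2 := (Real.sq_sqrt (hBpos u hu).le).symm
  set e₁ := γ⁻¹ • u
  have hu' : u = γ • e₁ := by simp [e₁, smul_smul, hγ.ne']
  have h₁ : B e₁ e₁ = 1 := by
    simp only [e₁, map_smul, _root_.smul_apply, smul_eq_mul, hγsq]
    field_simp
  have hT : T v u u = γ ^ 2 * T v e₁ e₁ := by
    rw [hu']; simp only [map_smul, _root_.smul_apply, smul_eq_mul]; ring
  rw [hT, hγsq, abs_mul, abs_of_nonneg (sq_nonneg γ), mul_comm 2 (γ ^ 2), mul_assoc]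
  exact mul_le_mul_of_nonneg_left
    (abs_apply_le_of_apply_self_eq_one hT₁₂ hT₂₃ hB hBpos hunit h₁ v) (sq_nonneg γ)

end SymmetricTrilinear

section LineDerivatives

variable {E F : Type*} [NormedAddCommGroup E] [NormedSpace ℝ E] [NormedAddCommGroup F]
  [NormedSpace ℝ F]

theorem hasDerivAt_comp_add_smul {g : E → F} {x v : E} {s : ℝ}
    (hg : DifferentiableAt ℝ g (x + s • v)) :
    HasDerivAt (fun s : ℝ => g (x + s • v)) (fderiv ℝ g (x + s • v) v) s := by
  have hline : HasDerivAt (fun s : ℝ => x + s • v) v s := by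
    simpa using ((hasDerivAt_id s).smul_const v).const_add x
  exact hg.hasFDerivAt.comp_hasDerivAt s hline

theorem hasDerivAt_apply_comp_add_smul {g : E → E →L[ℝ] F} {x v : E} {s : ℝ}
    (hg : DifferentiableAt ℝ g (x + s • v)) (a : E) :
    HasDerivAt (fun s : ℝ => g (x + s • v) a) (fderiv ℝ g (x + s • v) v a) s := by
  simpa using (hasDerivAt_comp_add_smul hg).clm_apply (hasDerivAt_const s a)

variable {f : E → ℝ}

theorem hasDerivAt_fderiv_fderiv_comp_add_smul (hf : ContDiff ℝ 3 f) (x v a b : E) (s : ℝ) :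
    HasDerivAt (fun s : ℝ => fderiv ℝ (fderiv ℝ f) (x + s • v) a b)
      (fderiv ℝ (fderiv ℝ (fderiv ℝ f)) (x + s • v) v a b) s := by
  have hdiff : Differentiable ℝ (fderiv ℝ (fderiv ℝ f)) :=
    ((hf.fderiv_right (m := 2) le_rfl).fderiv_right (m := 1) le_rfl).differentiable one_ne_zero
  simpa using (hasDerivAt_apply_comp_add_smul (hdiff _) a).clm_apply (hasDerivAt_const s b)

theorem iteratedDeriv_two_comp_add_smul (hf : ContDiff ℝ 3 f) (x v : E) (s : ℝ) :
    iteratedDeriv 2 (fun s : ℝ => f (x + s • v)) s = fderiv ℝ (fderiv ℝ f) (x + s • v) v v := by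
  have hf₁ : ContDiff ℝ 2 (fderiv ℝ f) := hf.fderiv_right le_rfl
  have hderiv : deriv (fun s : ℝ => f (x + s • v)) = fun s => fderiv ℝ f (x + s • v) v :=
    funext fun s => (hasDerivAt_comp_add_smul ((hf.differentiable (by norm_num)) _)).deriv
  rw [iteratedDeriv_succ, iteratedDeriv_one, hderiv]
  exact (hasDerivAt_apply_comp_add_smul ((hf₁.differentiable (by norm_num)) _) v).deriv

theorem iteratedDeriv_three_comp_add_smul (hf : ContDiff ℝ 3 f) (x v : E) (s : ℝ) :
    iteratedDeriv 3 (fun s : ℝ => f (x + s • v)) s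
      = fderiv ℝ (fderiv ℝ (fderiv ℝ f)) (x + s • v) v v v := by
  rw [iteratedDeriv_succ, funext (iteratedDeriv_two_comp_add_smul hf x v)]
  exact (hasDerivAt_fderiv_fderiv_comp_add_smul hf x v v v s).deriv

theorem fderiv_fderiv_swap (hf : ContDiff ℝ 2 f) (y a b : E) :
    fderiv ℝ (fderiv ℝ f) y a b = fderiv ℝ (fderiv ℝ f) y b a :=
  hf.contDiffAt.isSymmSndFDerivAt (by simp) a b

theorem fderiv_fderiv_fderiv_swap₁₂ (hf : ContDiff ℝ 3 f) (y a b c : E) :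
    fderiv ℝ (fderiv ℝ (fderiv ℝ f)) y a b c = fderiv ℝ (fderiv ℝ (fderiv ℝ f)) y b a c := by
  rw [(hf.fderiv_right (m := 2) le_rfl).contDiffAt.isSymmSndFDerivAt (by simp) a b]

theorem fderiv_fderiv_fderiv_swap₂₃ (hf : ContDiff ℝ 3 f) (y a b c : E) :
    fderiv ℝ (fderiv ℝ (fderiv ℝ f)) y a b c = fderiv ℝ (fderiv ℝ (fderiv ℝ f)) y a c b := by
  have hbc := hasDerivAt_fderiv_fderiv_comp_add_smul hf y a b c 0
  have hcb := hasDerivAt_fderiv_fderiv_comp_add_smul hf y a c b 0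
  simp only [zero_smul, add_zero] at hbc hcb
  rw [funext fun s => fderiv_fderiv_swap (hf.of_le (by norm_num)) (y + s • a) b c] at hbc
  exact hbc.unique hcb

end LineDerivatives

theorem one_sub_mul_mul_sqrt_le {m m' : ℝ → ℝ} (hm : ∀ s, HasDerivAt m (m' s) s)
    (hpos : ∀ s, 0 < m s) (hm' : ∀ s, m' s ≤ 2 * m s ^ (3 / 2 : ℝ)) {r s : ℝ} (hr : √(m 0) ≤ r)
    (hs : 0 ≤ s) : (1 - s * r) * √(m s) ≤ r := by
  have hsqrt : ∀ s, 0 < √(m s) := fun s => Real.sqrt_pos.2 (hpos s)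
  have hm'' : ∀ s, m' s ≤ 2 * (m s * √(m s)) := fun s => by
    rw [Real.sqrt_eq_rpow, ← Real.rpow_one_add' (hpos s).le (by norm_num)]
    norm_num [hm' s]
  have hmono : Monotone fun s => (√(m s))⁻¹ + s := by
    refine monotone_of_hasDerivAt_nonneg
      (fun s => (((hm s).sqrt (hpos s).ne').inv (hsqrt s).ne').add (hasDerivAt_id s)) fun s => ?_
    have hsq : √(m s) ^ 2 = m s := Real.sq_sqrt (hpos s).le
    have := hsqrt s
    have : m' s / (2 * √(m s)) / √(m s) ^ 2 ≤ 1 := by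
      rw [div_div, div_le_one (by positivity)]
      calc m' s ≤ 2 * (m s * √(m s)) := hm'' s
        _ = 2 * √(m s) * √(m s) ^ 2 := by rw [hsq]; ring
    simp only [Pi.zero_apply, neg_div]
    linarith
  have hr0 : 0 < r := (hsqrt 0).trans_le hr
  have key : r⁻¹ - s ≤ (√(m s))⁻¹ := by
    have := hmono hs
    simp only [add_zero] at this
    linarith [inv_anti₀ (hsqrt 0) hr]
  have := hsqrt s
  calc (1 - s * r) * √(m s) = r * √(m s) * (r⁻¹ - s) := by field_simp
    _ ≤ r * √(m s) * (√(m s))⁻¹ := mul_le_mul_of_nonneg_left key (by positivity)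
    _ = r := by field_simp

theorem sq_one_sub_mul_apply_one_le_apply_zero {h h' : ℝ → ℝ} {r : ℝ} (hr : r < 1)
    (hh : ∀ s, HasDerivAt h (h' s) s)
    (hbound : ∀ s ∈ Icc (0 : ℝ) 1, (1 - s * r) * |h' s| ≤ 2 * r * h s) :
    (1 - r) ^ 2 * h 1 ≤ h 0 := by
  have hanti : AntitoneOn (fun s => (1 - s * r) ^ 2 * h s) (Icc 0 1) := by
    have hd : ∀ s, HasDerivAt (fun s => (1 - s * r) ^ 2 * h s)
        (2 * (1 - s * r) ^ 1 * (-r) * h s + (1 - s * r) ^ 2 * h' s) s := fun s => by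
      have hlin : HasDerivAt (fun s : ℝ => 1 - s * r) (-r) s := by
        simpa using ((hasDerivAt_id s).mul_const r).const_sub 1
      exact (hlin.pow 2).mul (hh s)
    refine antitoneOn_of_hasDerivWithinAt_nonpos (convex_Icc 0 1)
      (fun s _ => (hd s).continuousAt.continuousWithinAt) (fun s _ => (hd s).hasDerivWithinAt)
      fun s hs => ?_
    rw [interior_Icc] at hs
    have hpos : 0 < 1 - s * r := by nlinarith [hs.1, hs.2]
    have := hbound s (Ioo_subset_Icc_self hs)
    nlinarith [le_abs_self (h' s), mul_le_mul_of_nonneg_left (le_abs_self (h' s)) hpos.le]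
  simpa using hanti (left_mem_Icc.2 zero_le_one) (right_mem_Icc.2 zero_le_one) zero_le_one

theorem sq_one_sub_mul_apply_zero_le_apply_one {h h' : ℝ → ℝ} {r : ℝ} (hr : r < 1)
    (hh : ∀ s, HasDerivAt h (h' s) s)
    (hbound : ∀ s ∈ Icc (0 : ℝ) 1, (1 - s * r) * |h' s| ≤ 2 * r * h s) :
    (1 - r) ^ 2 * h 0 ≤ h 1 := by
  have hpos : ∀ s ∈ Icc (0 : ℝ) 1, 0 < 1 - s * r := fun s hs => by
    rcases le_total r 0 with hr0 | hr0 <;> nlinarith [hs.1, hs.2]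
  have hmono : MonotoneOn (fun s => h s / (1 - s * r) ^ 2) (Icc 0 1) := by
    have hd : ∀ s ∈ Icc (0 : ℝ) 1, HasDerivAt (fun s => h s / (1 - s * r) ^ 2)
        ((h' s * (1 - s * r) ^ 2 - h s * (2 * (1 - s * r) ^ 1 * (-r))) / ((1 - s * r) ^ 2) ^ 2) s :=
      fun s hs => by
        have hlin : HasDerivAt (fun s : ℝ => 1 - s * r) (-r) s := by
          simpa using ((hasDerivAt_id s).mul_const r).const_sub 1
        exact (hh s).div (hlin.pow 2) (pow_ne_zero 2 (hpos s hs).ne')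
    refine monotoneOn_of_hasDerivWithinAt_nonneg (convex_Icc 0 1)
      (fun s hs => (hd s hs).continuousAt.continuousWithinAt)
      (fun s hs => (hd s (interior_subset hs)).hasDerivWithinAt) fun s hs => ?_
    have hs' := interior_subset hs
    have hp := hpos s hs'
    have := hbound s hs'
    apply div_nonneg _ (by positivity)
    nlinarith [neg_abs_le (h' s), mul_le_mul_of_nonneg_left (neg_abs_le (h' s)) hp.le]
  have := hmono (left_mem_Icc.2 zero_le_one) (right_mem_Icc.2 zero_le_one) zero_le_one
  simp only [zero_mul, sub_zero, one_pow, div_one, one_mul] at this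
  rwa [le_div_iff₀ (by nlinarith), mul_comm] at this

section SelfConcordance

variable {E : Type*} [NormedAddCommGroup E] [NormedSpace ℝ E] {f : E → ℝ}

theorem hessian_bounds_of_self_concordant (hf : ContDiff ℝ 3 f)
    (hpos : ∀ y w, w ≠ 0 → 0 < fderiv ℝ (fderiv ℝ f) y w w)
    (hsc : ∀ y w, |fderiv ℝ (fderiv ℝ (fderiv ℝ f)) y w w w|
      ≤ 2 * fderiv ℝ (fderiv ℝ f) y w w ^ (3 / 2 : ℝ))
    {x v : E} {r : ℝ} (hv : √(fderiv ℝ (fderiv ℝ f) x v v) ≤ r) (hr : r < 1) (u : E) :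
    (1 - r) ^ 2 * fderiv ℝ (fderiv ℝ f) x u u ≤ fderiv ℝ (fderiv ℝ f) (x + v) u u ∧
      (1 - r) ^ 2 * fderiv ℝ (fderiv ℝ f) (x + v) u u ≤ fderiv ℝ (fderiv ℝ f) x u u := by
  have hr0 : 0 ≤ r := (Real.sqrt_nonneg _).trans hv
  have hnonneg : ∀ y w, 0 ≤ fderiv ℝ (fderiv ℝ f) y w w := fun y w => by
    rcases eq_or_ne w 0 with rfl | hw
    · simp
    · exact (hpos y w hw).le
  rcases eq_or_ne v 0 with rfl | hv0
  · have := hnonneg x u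
    have : (1 - r) ^ 2 ≤ 1 := by nlinarith
    simp only [add_zero, and_self]
    nlinarith
  set h := fun s : ℝ => fderiv ℝ (fderiv ℝ f) (x + s • v) u u
  set m := fun s : ℝ => fderiv ℝ (fderiv ℝ f) (x + s • v) v v
  have hmixed : ∀ s : ℝ, |fderiv ℝ (fderiv ℝ (fderiv ℝ f)) (x + s • v) v u u| ≤ 2 * h s * √(m s) :=
    fun s => abs_apply_le_mul_sqrt (fderiv_fderiv_fderiv_swap₁₂ hf _)
      (fderiv_fderiv_fderiv_swap₂₃ hf _) (fderiv_fderiv_swap (hf.of_le (by norm_num)) _)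
      (hpos _) (hsc _) u v
  have hgrowth : ∀ s ∈ Icc (0 : ℝ) 1, (1 - s * r) * √(m s) ≤ r := fun s hs =>
    one_sub_mul_mul_sqrt_le (hasDerivAt_fderiv_fderiv_comp_add_smul hf x v v v)
      (fun _ => hpos _ v hv0) (fun _ => (le_abs_self _).trans (hsc _ v)) (by simpa [m] using hv)
      hs.1
  have hbound : ∀ s ∈ Icc (0 : ℝ) 1,
      (1 - s * r) * |fderiv ℝ (fderiv ℝ (fderiv ℝ f)) (x + s • v) v u u| ≤ 2 * r * h s := by
    intro s hs
    have h1 : 0 ≤ 1 - s * r := by nlinarith [hs.1, hs.2]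
    calc (1 - s * r) * |fderiv ℝ (fderiv ℝ (fderiv ℝ f)) (x + s • v) v u u|
        ≤ (1 - s * r) * (2 * h s * √(m s)) := mul_le_mul_of_nonneg_left (hmixed s) h1
      _ = 2 * h s * ((1 - s * r) * √(m s)) := by ring
      _ ≤ 2 * h s * r := mul_le_mul_of_nonneg_left (hgrowth s hs) (by simp [h, hnonneg])
      _ = 2 * r * h s := by ring
  have hh := hasDerivAt_fderiv_fderiv_comp_add_smul hf x v u u
  exact ⟨by simpa [h] using sq_one_sub_mul_apply_zero_le_apply_one hr hh hbound,
    by simpa [h] using sq_one_sub_mul_apply_one_le_apply_zero hr hh hbound⟩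

end SelfConcordance

namespace Matrix

variable {ι κ : Type*} [Fintype ι] [Fintype κ]

theorem dotProduct_mulVec_le_of_le {A B : Matrix ι ι ℝ} (h : A ≤ B) (z : ι → ℝ) :
    z ⬝ᵥ A *ᵥ z ≤ z ⬝ᵥ B *ᵥ z := by
  have := (le_iff.1 h).dotProduct_mulVec_nonneg z
  rw [star_trivial, sub_mulVec, dotProduct_sub] at this
  linarith

theorem le_of_dotProduct_mulVec_le {A B : Matrix ι ι ℝ} (hA : A.IsHermitian)
    (hB : B.IsHermitian) (h : ∀ z, z ⬝ᵥ A *ᵥ z ≤ z ⬝ᵥ B *ᵥ z) : A ≤ B :=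
  le_iff.2 <| PosSemidef.of_dotProduct_mulVec_nonneg (hB.sub hA) fun z => by
    rw [star_trivial, sub_mulVec, dotProduct_sub, sub_nonneg]
    exact h z

theorem dotProduct_mulVec_comm_of_isHermitian {A : Matrix ι ι ℝ} (hA : A.IsHermitian)
    (a b : ι → ℝ) : a ⬝ᵥ A *ᵥ b = b ⬝ᵥ A *ᵥ a := by
  rw [dotProduct_mulVec, ← mulVec_transpose, ← conjTranspose_eq_transpose_of_trivial, hA.eq,
    dotProduct_comm]

theorem inv_le_inv_of_le [DecidableEq ι] {A B : Matrix ι ι ℝ} (hA : A.PosDef) (hB : B.PosDef)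
    (h : A ≤ B) : B⁻¹ ≤ A⁻¹ := by
  refine le_of_dotProduct_mulVec_le hB.inv.isHermitian hA.inv.isHermitian fun z => ?_
  set y := B⁻¹ *ᵥ z
  set w := A⁻¹ *ᵥ z
  have hBy : B *ᵥ y = z := by
    rw [mulVec_mulVec, mul_nonsing_inv _ ((isUnit_iff_isUnit_det B).1 hB.isUnit), one_mulVec]
  have hAw : A *ᵥ w = z := by
    rw [mulVec_mulVec, mul_nonsing_inv _ ((isUnit_iff_isUnit_det A).1 hA.isUnit), one_mulVec]
  -- `0 ≤ (w - y)ᵀ A (w - y) ≤ zᵀ w - zᵀ y`, using `yᵀ A y ≤ yᵀ B y = zᵀ y`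
  have hnonneg := hA.posSemidef.dotProduct_mulVec_nonneg (w - y)
  have hy := dotProduct_mulVec_le_of_le h y
  rw [star_trivial, mulVec_sub, dotProduct_sub, sub_dotProduct, sub_dotProduct,
    dotProduct_mulVec_comm_of_isHermitian hA.isHermitian w y, hAw] at hnonneg
  rw [hBy] at hy
  simp only [y, w, dotProduct_comm z] at hnonneg hy ⊢
  linarith

theorem dotProduct_mulVec_transpose_mul_mul (P : Matrix κ ι ℝ) (A : Matrix κ κ ℝ) (z : ι → ℝ) :
    z ⬝ᵥ (Pᵀ * A * P) *ᵥ z = (P *ᵥ z) ⬝ᵥ A *ᵥ (P *ᵥ z) := by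
  rw [← mulVec_mulVec, ← mulVec_mulVec, dotProduct_mulVec z Pᵀ, vecMul_transpose]

theorem dotProduct_mulVec_inv_mulVec_le {H Q : Matrix ι ι ℝ} [DecidableEq ι] (hHQ : H ≤ Q)
    (hQ : IsUnit Q) (w : ι → ℝ) :
    (Q⁻¹ *ᵥ w) ⬝ᵥ H *ᵥ (Q⁻¹ *ᵥ w) ≤ w ⬝ᵥ Q⁻¹ *ᵥ w :=
  calc (Q⁻¹ *ᵥ w) ⬝ᵥ H *ᵥ (Q⁻¹ *ᵥ w) ≤ (Q⁻¹ *ᵥ w) ⬝ᵥ Q *ᵥ (Q⁻¹ *ᵥ w) :=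
        dotProduct_mulVec_le_of_le hHQ _
    _ = w ⬝ᵥ Q⁻¹ *ᵥ w := by
        rw [mulVec_mulVec, mul_nonsing_inv _ ((isUnit_iff_isUnit_det Q).1 hQ), one_mulVec,
          dotProduct_comm]

theorem dotProduct_mulVec_coarse_step_le [DecidableEq ι] {H : Matrix κ κ ℝ} {P : Matrix κ ι ℝ}
    {Q : Matrix ι ι ℝ} (hHQ : Pᵀ * H * P ≤ Q) (hQ : IsUnit Q) (g : κ → ℝ) :
    (P *ᵥ (Q⁻¹ *ᵥ (Pᵀ *ᵥ g))) ⬝ᵥ H *ᵥ (P *ᵥ (Q⁻¹ *ᵥ (Pᵀ *ᵥ g)))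
      ≤ g ⬝ᵥ (P *ᵥ (Q⁻¹ *ᵥ (Pᵀ *ᵥ g))) := by
  rw [← dotProduct_mulVec_transpose_mul_mul, dotProduct_mulVec g P, ← mulVec_transpose]
  exact dotProduct_mulVec_inv_mulVec_le hHQ hQ _

section Eigenvectors

variable [DecidableEq ι] {u : ι → ι → ℝ} {A B : Matrix ι ι ℝ} {a b : ι → ℝ}

theorem mul_transpose_of_orthonormal (hu : ∀ i j, u i ⬝ᵥ u j = if i = j then 1 else 0) :
    of u * (of u)ᵀ = 1 := by
  ext i j
  simpa [mul_apply, one_apply, dotProduct] using hu i j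

theorem eq_transpose_mul_diagonal_mul_of_orthonormal
    (hu : ∀ i j, u i ⬝ᵥ u j = if i = j then 1 else 0) (hA : ∀ i, A *ᵥ u i = a i • u i) :
    A = (of u)ᵀ * diagonal a * of u := by
  have hAu : A * (of u)ᵀ = (of u)ᵀ * diagonal a := by
    ext k i
    rw [mul_diagonal]
    simpa [mul_apply, mulVec, dotProduct, mul_comm] using congrFun (hA i) k
  calc A = A * ((of u)ᵀ * of u) := by
        rw [mul_eq_one_comm.1 (mul_transpose_of_orthonormal hu), Matrix.mul_one]
    _ = (of u)ᵀ * diagonal a * of u := by rw [← Matrix.mul_assoc, hAu]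

theorem le_of_orthonormal_eigenvectors (hu : ∀ i j, u i ⬝ᵥ u j = if i = j then 1 else 0)
    (hA : ∀ i, A *ᵥ u i = a i • u i) (hB : ∀ i, B *ᵥ u i = b i • u i) (hab : a ≤ b) : A ≤ B := by
  rw [le_iff, eq_transpose_mul_diagonal_mul_of_orthonormal hu hA,
    eq_transpose_mul_diagonal_mul_of_orthonormal hu hB, ← Matrix.sub_mul, ← Matrix.mul_sub,
    diagonal_sub, ← conjTranspose_eq_transpose_of_trivial]
  exact (PosSemidef.diagonal (sub_nonneg.2 hab)).conjTranspose_mul_mul_same _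

theorem isUnit_of_orthonormal_eigenvectors (hu : ∀ i j, u i ⬝ᵥ u j = if i = j then 1 else 0)
    (hB : ∀ i, B *ᵥ u i = b i • u i) (hb : ∀ i, b i ≠ 0) : IsUnit B := by
  have hV := mul_transpose_of_orthonormal hu
  have hVunit : IsUnit (of u) := ⟨⟨of u, (of u)ᵀ, hV, mul_eq_one_comm.1 hV⟩, rfl⟩
  rw [eq_transpose_mul_diagonal_mul_of_orthonormal hu hB]
  have hD : IsUnit (diagonal b) := isUnit_diagonal.2 (Pi.isUnit_iff.2 fun i => (hb i).isUnit)
  exact (((isUnit_transpose _).2 hVunit).mul hD).mul hVunit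

end Eigenvectors

end Matrix

section LoewnerBounds

variable {ι : Type*} [Fintype ι] {f : (ι → ℝ) → ℝ} {hess : (ι → ℝ) → Matrix ι ι ℝ}

theorem hess_add_loewner_bounds (hf : ContDiff ℝ 3 f)
    (hhess : ∀ x u : ι → ℝ, iteratedDeriv 2 (fun t : ℝ => f (x + t • u)) 0 = u ⬝ᵥ hess x *ᵥ u)
    (hpd : ∀ x, (hess x).PosDef)
    (hsc : ∀ x u : ι → ℝ, |iteratedDeriv 3 (fun s : ℝ => f (x + s • u)) 0|
      ≤ 2 * iteratedDeriv 2 (fun s : ℝ => f (x + s • u)) 0 ^ (3 / 2 : ℝ))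
    {x v : ι → ℝ} {r : ℝ} (hv : √(v ⬝ᵥ hess x *ᵥ v) ≤ r) (hr : r < 1) :
    (1 - r) ^ 2 • hess x ≤ hess (x + v) ∧ hess (x + v) ≤ ((1 - r) ^ 2)⁻¹ • hess x := by
  have hD2 : ∀ y w, fderiv ℝ (fderiv ℝ f) y w w = w ⬝ᵥ hess y *ᵥ w := fun y w => by
    simpa [iteratedDeriv_two_comp_add_smul hf] using hhess y w
  have hpos : ∀ y w, w ≠ 0 → 0 < fderiv ℝ (fderiv ℝ f) y w w := fun y w hw => by
    simpa [hD2] using (hpd y).dotProduct_mulVec_pos hw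
  have hsc' : ∀ y w, |fderiv ℝ (fderiv ℝ (fderiv ℝ f)) y w w w|
      ≤ 2 * fderiv ℝ (fderiv ℝ f) y w w ^ (3 / 2 : ℝ) := fun y w => by
    simpa [iteratedDeriv_two_comp_add_smul hf, iteratedDeriv_three_comp_add_smul hf] using hsc y w
  have hbounds := hessian_bounds_of_self_concordant hf hpos hsc' (by rwa [hD2]) hr
  simp only [hD2] at hbounds
  have hc : 0 < (1 - r) ^ 2 := pow_pos (sub_pos.2 hr) 2
  refine ⟨le_of_dotProduct_mulVec_le ((hpd x).smul hc).isHermitian (hpd _).isHermitian fun w => ?_,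
    le_of_dotProduct_mulVec_le (hpd _).isHermitian ((hpd x).smul (inv_pos.2 hc)).isHermitian
      fun w => ?_⟩
  · simpa [smul_mulVec] using (hbounds w).1
  · rw [smul_mulVec, dotProduct_smul, smul_eq_mul, le_inv_mul_iff₀ hc]
    exact (hbounds w).2

end LoewnerBounds

theorem stmt12_general {n N p : ℕ} (hpN : p < N)
    (f : (Fin n → ℝ) → ℝ) (grad : (Fin n → ℝ) → Fin n → ℝ)
    (hess : (Fin n → ℝ) → Matrix (Fin n) (Fin n) ℝ)
    (hf : ContDiff ℝ 3 f)
    (hhessq : ∀ x u : Fin n → ℝ,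
      iteratedDeriv 2 (fun t : ℝ => f (x + t • u)) 0 = u ⬝ᵥ (hess x *ᵥ u))
    (hhpd : ∀ x, (hess x).PosDef)
    (hsc : ∀ x u : Fin n → ℝ, ∀ t : ℝ,
      |iteratedDeriv 3 (fun s : ℝ => f (x + s • u)) t|
        ≤ 2 * iteratedDeriv 2 (fun s : ℝ => f (x + s • u)) t ^ ((3 : ℝ) / 2))
    (x : Fin n → ℝ)
    (P : Matrix (Fin n) (Fin N) ℝ)
    (σ : Fin N → ℝ) (u : Fin N → Fin N → ℝ)
    (hσpos : ∀ i, 0 < σ i)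
    (hσmono : ∀ i j : Fin N, i ≤ j → σ j ≤ σ i)
    (hortho : ∀ i j : Fin N, u i ⬝ᵥ u j = if i = j then (1 : ℝ) else 0)
    (hHreig : ∀ i, (Pᵀ * hess x * P) *ᵥ u i = σ i • u i)
    (Q : Matrix (Fin N) (Fin N) ℝ)
    (hQeig : ∀ i : Fin N, Q *ᵥ u i = (if (i : ℕ) < p then σ i else σ ⟨p, hpN⟩) • u i)
    (lamhat : ℝ)
    (hlamhat : lamhat = Real.sqrt (grad x ⬝ᵥ (P *ᵥ (Q⁻¹ *ᵥ (Pᵀ *ᵥ grad x)))))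
    (t : ℝ) (ht : 0 < t) (htl : t * lamhat < 1) :
    (((1 - t * lamhat) ^ 2)⁻¹ • hess x
        - hess (x + t • -(P *ᵥ (Q⁻¹ *ᵥ (Pᵀ *ᵥ grad x))))).PosSemidef ∧
    (((1 - t * lamhat) ^ 2)⁻¹ • (hess x)⁻¹
        - (hess (x + t • -(P *ᵥ (Q⁻¹ *ᵥ (Pᵀ *ᵥ grad x)))))⁻¹).PosSemidef := by
  set d := -(P *ᵥ (Q⁻¹ *ᵥ (Pᵀ *ᵥ grad x)))
  have hQ : IsUnit Q := isUnit_of_orthonormal_eigenvectors hortho hQeig fun i => by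
    split_ifs <;> exact (hσpos _).ne'
  have hHrQ : Pᵀ * hess x * P ≤ Q := le_of_orthonormal_eigenvectors hortho hHreig hQeig fun i => by
    dsimp only
    split_ifs with hi
    · exact le_rfl
    · exact hσmono _ _ (Fin.le_def.2 (not_lt.1 hi))
  have hstep : √((t • d) ⬝ᵥ hess x *ᵥ (t • d)) ≤ t * lamhat := by
    rw [show (t • d) ⬝ᵥ hess x *ᵥ (t • d) = t ^ 2 * (d ⬝ᵥ hess x *ᵥ d) by
        simp only [mulVec_smul, dotProduct_smul, smul_dotProduct, smul_eq_mul]; ring,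
      Real.sqrt_mul (sq_nonneg t), Real.sqrt_sq ht.le, hlamhat]
    refine mul_le_mul_of_nonneg_left (Real.sqrt_le_sqrt ?_) ht.le
    simpa only [d, mulVec_neg, dotProduct_neg, neg_dotProduct, neg_neg]
      using dotProduct_mulVec_coarse_step_le hHrQ hQ (grad x)
  obtain ⟨hlow, hup⟩ := hess_add_loewner_bounds hf hhessq hhpd (fun y w => hsc y w 0) hstep htl
  set c := (1 - t * lamhat) ^ 2
  have hc : 0 < c := pow_pos (sub_pos.2 htl) 2
  refine ⟨le_iff.1 hup, le_iff.1 ?_⟩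
  calc (hess (x + t • d))⁻¹ ≤ (c • hess x)⁻¹ := inv_le_inv_of_le ((hhpd x).smul hc) (hhpd _) hlow
    _ = c⁻¹ • (hess x)⁻¹ :=
        inv_smul' _ (Units.mk0 c hc.ne') ((isUnit_iff_isUnit_det _).1 (hhpd x).isUnit)

/-- Let `f` be strictly convex standard self-concordant, `x`
a point, `H := ∇²f(x)`, `P` an `n×N` matrix of full column rank,
`H_r := Pᵀ H P`, and `Q` the coarse truncated approximation of `H_r` with
parameter `p`.  Let `λ̂ = (∇f(x)ᵀ P Q⁻¹ Pᵀ ∇f(x))^{1/2}` and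
`d̂ = −P Q⁻¹ Pᵀ ∇f(x)`.  If `t > 0` satisfies `t λ̂ < 1` and `x⁺ := x + t d̂`,
then `∇²f(x⁺) ⪯ (1 − t λ̂)⁻² ∇²f(x)` and
`[∇²f(x⁺)]⁻¹ ⪯ (1 − t λ̂)⁻² [∇²f(x)]⁻¹` in the Loewner order. -/
theorem stmt12 {n N p : ℕ} (hp : 1 ≤ p) (hpN : p < N) (hNn : N < n)
    (f : (Fin n → ℝ) → ℝ) (grad : (Fin n → ℝ) → Fin n → ℝ)
    (hess : (Fin n → ℝ) → Matrix (Fin n) (Fin n) ℝ)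
    (hf : ContDiff ℝ 3 f)
    (hconv : StrictConvexOn ℝ Set.univ f)
    (hgrad : ∀ x u : Fin n → ℝ, deriv (fun t : ℝ => f (x + t • u)) 0 = grad x ⬝ᵥ u)
    (hhessq : ∀ x u : Fin n → ℝ,
      iteratedDeriv 2 (fun t : ℝ => f (x + t • u)) 0 = u ⬝ᵥ (hess x *ᵥ u))
    (hhsymm : ∀ x, (hess x).IsSymm)
    (hhpd : ∀ x, (hess x).PosDef)
    (hsc : ∀ x u : Fin n → ℝ, ∀ t : ℝ,
      |iteratedDeriv 3 (fun s : ℝ => f (x + s • u)) t|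
        ≤ 2 * iteratedDeriv 2 (fun s : ℝ => f (x + s • u)) t ^ ((3 : ℝ) / 2))
    (hclosed : ∀ c : ℝ, IsClosed {x | f x ≤ c})
    (hbdd : BddBelow (Set.range f))
    (x : Fin n → ℝ)
    (P : Matrix (Fin n) (Fin N) ℝ) (hP : P.rank = N)
    (σ : Fin N → ℝ) (u : Fin N → Fin N → ℝ)
    (hσpos : ∀ i, 0 < σ i)
    (hσmono : ∀ i j : Fin N, i ≤ j → σ j ≤ σ i)
    (hortho : ∀ i j : Fin N, u i ⬝ᵥ u j = if i = j then (1 : ℝ) else 0)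
    (hHreig : ∀ i, (Pᵀ * hess x * P) *ᵥ u i = σ i • u i)
    (Q : Matrix (Fin N) (Fin N) ℝ) (hQsymm : Q.IsSymm)
    (hQeig : ∀ i : Fin N, Q *ᵥ u i = (if (i : ℕ) < p then σ i else σ ⟨p, hpN⟩) • u i)
    (lamhat : ℝ)
    (hlamhat : lamhat = Real.sqrt (grad x ⬝ᵥ (P *ᵥ (Q⁻¹ *ᵥ (Pᵀ *ᵥ grad x)))))
    (t : ℝ) (ht : 0 < t) (htl : t * lamhat < 1) :
    (((1 - t * lamhat) ^ 2)⁻¹ • hess x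
        - hess (x + t • -(P *ᵥ (Q⁻¹ *ᵥ (Pᵀ *ᵥ grad x))))).PosSemidef ∧
    (((1 - t * lamhat) ^ 2)⁻¹ • (hess x)⁻¹
        - (hess (x + t • -(P *ᵥ (Q⁻¹ *ᵥ (Pᵀ *ᵥ grad x)))))⁻¹).PosSemidef :=
  stmt12_general hpN f grad hess hf hhessq hhpd hsc x P σ u hσpos hσmono hortho hHreig Q hQeig
    lamhat hlamhat t ht htl
end
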